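/- Combining the two steps: under the assumptions that P is nonnegative, β and β' are nonnegative, P(m) ≤ P(M) for all m ∈ {M, ..., N}, β(m) ≤ β̂ for all m ∈ {M, ..., N}, Z = (N - M + 1) · β̂ > 0, and P(M) ≤ (1/Z) · ∑_{m'=0}^{M-1} (β'(m') - β(m')) · P(m'), the filtered total influence ∑_{m'=0}^{M-1} β'(m') · P(m') is at least the unfiltered total influence ∑_{m=0}^{N} β(m) · P(m). -/
import Mathlib


/-- Theorem 1 (effectiveness of the age filter), Appendix A. -/
theorem age_filter_effectiveness (N M : ℕ) (hM : 1 ≤ M) (hMN : M ≤ N)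
    (P β β' : ℕ → ℝ)
    (hP : ∀ m, 0 ≤ P m) (hβ : ∀ m, 0 ≤ β m) (hβ' : ∀ m, 0 ≤ β' m)
    (hPmax : ∀ m ∈ Finset.Icc M N, P m ≤ P M)
    (βhat Z : ℝ)
    (hβhat : ∀ m ∈ Finset.Icc M N, β m ≤ βhat)
    (hZ : Z = ((N : ℝ) - M + 1) * βhat) (hZpos : 0 < Z)
    (hthre : P M ≤ Z⁻¹ * ∑ m' ∈ Finset.range M, (β' m' - β m') * P m') :
    ∑ m' ∈ Finset.range M, β' m' * P m' ≥
      ∑ m ∈ Finset.range (N + 1), β m * P m := by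
  have hsplit : Finset.range (N + 1) = Finset.range M ∪ Finset.Icc M N := by
    ext x
    simp [Finset.mem_range, Finset.mem_Icc, Nat.lt_succ_iff]
    omega
  have hdisj : Disjoint (Finset.range M) (Finset.Icc M N) := by
    simp [Finset.disjoint_left, Finset.mem_range, Finset.mem_Icc]
    omega
  rw [hsplit, Finset.sum_union hdisj]
  have hPM : 0 ≤ P M := hP M
  have htail : ∑ m ∈ Finset.Icc M N, β m * P m ≤ Z * P M := by
    calc ∑ m ∈ Finset.Icc M N, β m * P m
        ≤ ∑ m ∈ Finset.Icc M N, βhat * P M := by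
          apply Finset.sum_le_sum
          intro m hm
          exact mul_le_mul (hβhat m hm) (hPmax m hm) (hP m)
            (le_trans (hβ m) (hβhat m hm))
      _ = ((N : ℝ) - M + 1) * βhat * P M := by
          rw [Finset.sum_const, Nat.card_Icc, nsmul_eq_mul,
            Nat.cast_sub (by omega : M ≤ N + 1)]
          push_cast
          ring
      _ = Z * P M := by rw [hZ]
  have hZthre : Z * P M ≤ ∑ m' ∈ Finset.range M, (β' m' - β m') * P m' := by
    have := mul_le_mul_of_nonneg_left hthre (le_of_lt hZpos)
    rwa [← mul_assoc, mul_inv_cancel₀ (ne_of_gt hZpos), one_mul] at this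
  have h := le_trans htail hZthre
  have hsub : ∑ m' ∈ Finset.range M, (β' m' - β m') * P m'
      = (∑ m' ∈ Finset.range M, β' m' * P m') - ∑ m' ∈ Finset.range M, β m' * P m' := by
    rw [← Finset.sum_sub_distrib]
    congr 1; ext m; ring
  rw [hsub] at h
  linarith
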